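/- arXiv:2109.09333 — 2 statements merged into one kernel-verified Lean document; each statement's English description precedes it below -/
import Mathlib

section
/- Let d ≥ 3 be an integer, 0 < b < 2, (4−2b)/d < σ < (4−2b)/(d−2), and c > −c(d) where c(d) := ((d−2)/2)². Set σ_c := (4−2b−(d−2)σ)/(dσ−4+2b). For every weakly differentiable f : ℝ^d → ℂ with finite M(f), ∫|∇f|²dx and P(f), one has the identity G(f) = ((dσ+2b)/2) E(f) − ((dσ−4+2b)/4) ‖f‖²_{Ḣ_c¹}. Consequently, if K_G > 0, H_G := ((dσ−4+2b)/(2(dσ+2b))) K_G², and f satisfies E(f)(M(f))^{σ_c} ≤ (1−δ₀) H_G for some δ₀ > 0 together with ‖f‖_{Ḣ_c¹}(M(f))^{σ_c/2} ≥ K_G, then G(f)(M(f))^{σ_c} ≤ −((dσ−4+2b)/4) δ₀ K_G². -/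
open MeasureTheory Filter Complex ComplexConjugate

noncomputable section

abbrev Ed (d : ℕ) : Type := EuclideanSpace ℝ (Fin d)

variable {d : ℕ} {F : Type*} [NormedAddCommGroup F] [NormedSpace ℝ F]

/-- The `j`-th partial derivative. -/
def pd (f : Ed d → F) (j : Fin d) (x : Ed d) : F :=
  fderiv ℝ f x (EuclideanSpace.single j 1)

/-- `|∇f(x)|²`. -/
def gradSq (f : Ed d → F) (x : Ed d) : ℝ :=
  ∑ j : Fin d, ‖pd f j x‖ ^ 2

/-- The Laplacian. -/
def lap (f : Ed d → F) (x : Ed d) : F :=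
  ∑ j : Fin d, pd (pd f j) j x

/-- The mass `M(f) = ∫ |f|²`. -/
def Mass (f : Ed d → F) : ℝ := ∫ x : Ed d, ‖f x‖ ^ 2

/-- The potential energy `P(f) = ∫ |x|^{-b} |f|^{σ+2}`. -/
def Pot (b σ : ℝ) (f : Ed d → F) : ℝ := ∫ x : Ed d, ‖x‖ ^ (-b) * ‖f x‖ ^ (σ + 2)

/-- The squared `Ḣ_c¹` norm. -/
def HcSq (c : ℝ) (f : Ed d → F) : ℝ :=
  ∫ x : Ed d, gradSq f x + c * ‖x‖ ^ (-2 : ℝ) * ‖f x‖ ^ 2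

/-- The energy `E(f)`. -/
def En (b σ c : ℝ) (f : Ed d → F) : ℝ := HcSq c f / 2 - Pot b σ f / (σ + 2)

/-- The virial functional `G(f)`. -/
def Gfun (b σ c : ℝ) (f : Ed d → F) : ℝ :=
  HcSq c f - (((d : ℝ) * σ + 2 * b) / (2 * (σ + 2))) * Pot b σ f

/-- A positive ground state solution of `P_c Q + Q - |x|^{-b} Q^{σ+1} = 0`. -/
def IsGroundState (b σ c : ℝ) (Q : Ed d → ℝ) : Prop :=
  (∀ x, 0 < Q x) ∧ ContDiffOn ℝ 2 Q {x : Ed d | x ≠ 0} ∧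
    Integrable (fun x : Ed d => ‖Q x‖ ^ 2) ∧ Integrable (gradSq Q) ∧
    ∀ x : Ed d, x ≠ 0 →
      -lap Q x + c * ‖x‖ ^ (-2 : ℝ) * Q x + Q x - ‖x‖ ^ (-b) * Q x ^ (σ + 1) = 0


/-- The identity `G(f) = ((dσ+2b)/2)E(f) - ((dσ-4+2b)/4)‖f‖²_{Ḣ_c¹}`, and
the uniform negativity of `G` for data below the threshold `H_G` with
`‖f‖_{Ḣ_c¹} M(f)^{σ_c/2} ≥ K_G`. -/
theorem stmt12 (d : ℕ) (hd : 3 ≤ d) (b σ c : ℝ)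
    (hb : 0 < b) (hb2 : b < 2)
    (hσ1 : (4 - 2 * b) / (d : ℝ) < σ) (hσ2 : σ < (4 - 2 * b) / ((d : ℝ) - 2))
    (hc : -((((d : ℝ) - 2) / 2) ^ 2) < c)
    (f : Ed d → ℂ) (hf : Differentiable ℝ f)
    (h1 : Integrable (fun x : Ed d => ‖f x‖ ^ 2)) (h2 : Integrable (gradSq f))
    (h3 : Integrable (fun x : Ed d => ‖x‖ ^ (-b) * ‖f x‖ ^ (σ + 2))) :
    Gfun b σ c f =
      (((d : ℝ) * σ + 2 * b) / 2) * En b σ c f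
        - (((d : ℝ) * σ - 4 + 2 * b) / 4) * HcSq c f ∧
    ∀ K_G δ₀ : ℝ, 0 < K_G → 0 < δ₀ →
      En b σ c f * Mass f ^ ((4 - 2 * b - ((d : ℝ) - 2) * σ) / ((d : ℝ) * σ - 4 + 2 * b))
        ≤ (1 - δ₀) * ((((d : ℝ) * σ - 4 + 2 * b) / (2 * ((d : ℝ) * σ + 2 * b))) * K_G ^ 2) →
      K_G ≤ Real.sqrt (HcSq c f) *
        Mass f ^ ((((4 - 2 * b - ((d : ℝ) - 2) * σ) / ((d : ℝ) * σ - 4 + 2 * b))) / 2) →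
      Gfun b σ c f * Mass f ^ ((4 - 2 * b - ((d : ℝ) - 2) * σ) / ((d : ℝ) * σ - 4 + 2 * b))
        ≤ -(((d : ℝ) * σ - 4 + 2 * b) / 4) * δ₀ * K_G ^ 2 := by
  have hd3 : (3 : ℝ) ≤ (d : ℝ) := by exact_mod_cast hd
  have hdpos : (0 : ℝ) < (d : ℝ) := by linarith
  have hB : 0 < (d : ℝ) * σ - 4 + 2 * b := by
    have := (div_lt_iff₀ hdpos).mp hσ1
    nlinarith
  have hA : 0 < (d : ℝ) * σ + 2 * b := by linarith
  have hσpos : 0 < σ := by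
    have h4 : 0 < (4 - 2 * b) / (d : ℝ) := div_pos (by linarith) hdpos
    linarith
  have hσ2ne : σ + 2 ≠ 0 := by linarith
  have hid : Gfun b σ c f =
      (((d : ℝ) * σ + 2 * b) / 2) * En b σ c f
        - (((d : ℝ) * σ - 4 + 2 * b) / 4) * HcSq c f := by
    unfold Gfun En
    field_simp
    ring
  refine ⟨hid, ?_⟩
  intro K δ hK hδ hE hH
  set s : ℝ := (4 - 2 * b - ((d : ℝ) - 2) * σ) / ((d : ℝ) * σ - 4 + 2 * b) with hs
  set m : ℝ := Mass f ^ s with hm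
  have hMass : 0 ≤ Mass f :=
    integral_nonneg fun x => by positivity
  have hm0 : 0 ≤ m := Real.rpow_nonneg hMass s
  have hHnn : 0 ≤ HcSq c f := by
    by_contra h
    push_neg at h
    rw [Real.sqrt_eq_zero_of_nonpos h.le, zero_mul] at hH
    linarith
  have hmsq : (Mass f ^ (s / 2)) ^ 2 = m := by
    rw [hm, ← Real.rpow_natCast (Mass f ^ (s / 2)) 2, ← Real.rpow_mul hMass]
    norm_num
  have hsq : K ^ 2 ≤ HcSq c f * m := by
    have := pow_le_pow_left₀ hK.le hH 2
    rwa [mul_pow, Real.sq_sqrt hHnn, hmsq] at this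
  have hGm : Gfun b σ c f * m =
      (((d : ℝ) * σ + 2 * b) / 2) * (En b σ c f * m)
        - (((d : ℝ) * σ - 4 + 2 * b) / 4) * (HcSq c f * m) := by
    rw [hid]; ring
  have h1' : (((d : ℝ) * σ + 2 * b) / 2) * (En b σ c f * m)
      ≤ (((d : ℝ) * σ + 2 * b) / 2) *
        ((1 - δ) * ((((d : ℝ) * σ - 4 + 2 * b) / (2 * ((d : ℝ) * σ + 2 * b))) * K ^ 2)) :=
    mul_le_mul_of_nonneg_left hE (by positivity)
  have h2' : (((d : ℝ) * σ - 4 + 2 * b) / 4) * K ^ 2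
      ≤ (((d : ℝ) * σ - 4 + 2 * b) / 4) * (HcSq c f * m) :=
    mul_le_mul_of_nonneg_left hsq (by positivity)
  have hAne : (d : ℝ) * σ + 2 * b ≠ 0 := ne_of_gt hA
  have key : (((d : ℝ) * σ + 2 * b) / 2) *
      ((1 - δ) * ((((d : ℝ) * σ - 4 + 2 * b) / (2 * ((d : ℝ) * σ + 2 * b))) * K ^ 2))
      = (1 - δ) * ((((d : ℝ) * σ - 4 + 2 * b) / 4) * K ^ 2) := by
    field_simp
    ring
  rw [hGm]
  rw [key] at h1'
  nlinarith [h1', h2']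

end
end

section
/- Let d ≥ 3 be an integer, 0 < b < 2, and (4−2b)/d < σ < (4−2b)/(d−2) (so that dσ + 2b > 4). Let E₀ ∈ ℝ, m > 0, C > 0, and define f : (−∞, 16E₀] → ℝ by f(x) := −x/(2dσ+4b−8) + (2dσ+4b)E₀/(dσ+2b−4) − ( (σ+2)(16E₀−x)/(4dσ+8b−16) )^{4/(dσ+2b)} / ( C^{4/(dσ+2b)} m^{(4−2b−(d−2)σ)/(dσ+2b)} ). Then there is a unique x₀ < 16E₀ such that 1/(2dσ+4b−8) = (4/(dσ+2b)) ((σ+2)/(4dσ+8b−16))^{4/(dσ+2b)} (16E₀−x₀)^{(4−dσ−2b)/(dσ+2b)} / ( C^{4/(dσ+2b)} m^{(4−2b−(d−2)σ)/(dσ+2b)} ); the function f is strictly decreasing on (−∞, x₀) and strictly increasing on (x₀, 16E₀], and f(x₀) = x₀/8. -/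
open MeasureTheory Filter Complex ComplexConjugate

noncomputable section

variable {d : ℕ} {F : Type*} [NormedAddCommGroup F] [NormedSpace ℝ F]

/-- The auxiliary function `f` arising from the differential inequality for the variance
above the ground state threshold. -/
def auxF (d : ℕ) (b σ E₀ C m x : ℝ) : ℝ :=
  -x / (2 * (d : ℝ) * σ + 4 * b - 8) + (2 * (d : ℝ) * σ + 4 * b) * E₀ / ((d : ℝ) * σ + 2 * b - 4)
    - ((σ + 2) * (16 * E₀ - x) / (4 * (d : ℝ) * σ + 8 * b - 16)) ^
        ((4 : ℝ) / ((d : ℝ) * σ + 2 * b)) /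
      (C ^ ((4 : ℝ) / ((d : ℝ) * σ + 2 * b)) *
        m ^ ((4 - 2 * b - ((d : ℝ) - 2) * σ) / ((d : ℝ) * σ + 2 * b)))

/-- The equation characterizing the critical point `x₀` of `auxF`. -/
def critEq (d : ℕ) (b σ E₀ C m x : ℝ) : Prop :=
  1 / (2 * (d : ℝ) * σ + 4 * b - 8) =
    ((4 : ℝ) / ((d : ℝ) * σ + 2 * b)) *
        ((σ + 2) / (4 * (d : ℝ) * σ + 8 * b - 16)) ^ ((4 : ℝ) / ((d : ℝ) * σ + 2 * b)) *
        (16 * E₀ - x) ^ ((4 - (d : ℝ) * σ - 2 * b) / ((d : ℝ) * σ + 2 * b)) /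
      (C ^ ((4 : ℝ) / ((d : ℝ) * σ + 2 * b)) *
        m ^ ((4 - 2 * b - ((d : ℝ) - 2) * σ) / ((d : ℝ) * σ + 2 * b)))

/-!
Writing `u = 16E₀ - x`, the function is `f = -x/D + K - k u^α` with `α = 4/(dσ + 2b) ∈ (0, 1)`,
`D = 2(dσ + 2b - 4) > 0` and `k > 0`. Its derivative `k α u^(α-1) - 1/D` is strictly increasing
in `x < 16E₀`, because `α - 1 < 0`, and it runs through all of `(-1/D, ∞)`, so it vanishes at exactly
one point `x₀` and changes sign there. At `x₀` the critical-point equation gives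
`k u^α = u/(αD)`, and with the specific values of `α`, `D`, `K` the value `f(x₀)` collapses
to `x₀/8`.
-/

open Set

section LinearSubRpow

variable {α k D K L x₀ : ℝ}

theorem hasDerivAt_linear_sub_rpow {x : ℝ} (hx : x < L) :
    HasDerivAt (fun x => -x / D + K - k * (L - x) ^ α) (k * α * (L - x) ^ (α - 1) - 1 / D) x := by
  have hpow := ((hasDerivAt_id x).const_sub L).rpow_const (p := α) (Or.inl (sub_pos.2 hx).ne')
  refine ((((hasDerivAt_id x).neg.div_const D).add_const K).sub (hpow.const_mul k)).congr_deriv ?_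
  simp only [id]
  ring

theorem continuous_linear_sub_rpow (hα : 0 ≤ α) :
    Continuous (fun x => -x / D + K - k * (L - x) ^ α) := by
  have hpow : Continuous (fun x : ℝ => (L - x) ^ α) :=
    continuous_iff_continuousAt.2 fun x =>
      (Real.continuousAt_rpow_const _ _ (Or.inr hα)).comp (by fun_prop)
  fun_prop

theorem strictMonoOn_mul_rpow_sub_one (hkα : 0 < k * α) (hα1 : α < 1) :
    StrictMonoOn (fun x => k * α * (L - x) ^ (α - 1)) (Iio L) := by
  intro a _ b hb hab
  have hlt : (L - a) ^ (α - 1) < (L - b) ^ (α - 1) :=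
    Real.rpow_lt_rpow_of_neg (sub_pos.2 hb) (by linarith) (by linarith)
  exact mul_lt_mul_of_pos_left hlt hkα

theorem existsUnique_mul_rpow_sub_one_eq (hkα : 0 < k * α) (hα1 : α < 1) {y : ℝ} (hy : 0 < y) :
    ∃! x, x < L ∧ k * α * (L - x) ^ (α - 1) = y := by
  have hu : 0 < (y / (k * α)) ^ (α - 1)⁻¹ := Real.rpow_pos_of_pos (div_pos hy hkα) _
  have hsol : k * α * (L - (L - (y / (k * α)) ^ (α - 1)⁻¹)) ^ (α - 1) = y := by
    rw [sub_sub_cancel, Real.rpow_inv_rpow (div_pos hy hkα).le (by linarith)]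
    exact mul_div_cancel₀ y hkα.ne'
  refine ⟨_, ⟨by linarith, hsol⟩, fun x ⟨hx, hxy⟩ => ?_⟩
  exact (strictMonoOn_mul_rpow_sub_one hkα hα1).injOn hx (by simp [hu]) (hxy.trans hsol.symm)

theorem strictAntiOn_Iio_linear_sub_rpow (hα0 : 0 < α) (hα1 : α < 1) (hk : 0 < k)
    (hx₀ : x₀ < L) (hcrit : k * α * (L - x₀) ^ (α - 1) = 1 / D) :
    StrictAntiOn (fun x => -x / D + K - k * (L - x) ^ α) (Iio x₀) := by
  refine strictAntiOn_of_hasDerivWithinAt_neg (convex_Iio x₀)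
    (continuous_linear_sub_rpow hα0.le).continuousOn
    (fun x hx => (hasDerivAt_linear_sub_rpow ?_).hasDerivWithinAt) fun x hx => ?_
  all_goals rw [interior_Iio] at hx
  · exact hx.trans hx₀
  · have := strictMonoOn_mul_rpow_sub_one (mul_pos hk hα0) hα1 (hx.trans hx₀) hx₀ hx
    simp only at this
    linarith

theorem strictMonoOn_Ioc_linear_sub_rpow (hα0 : 0 < α) (hα1 : α < 1) (hk : 0 < k)
    (hcrit : k * α * (L - x₀) ^ (α - 1) = 1 / D) :
    StrictMonoOn (fun x => -x / D + K - k * (L - x) ^ α) (Ioc x₀ L) := by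
  refine strictMonoOn_of_hasDerivWithinAt_pos (convex_Ioc x₀ L)
    (continuous_linear_sub_rpow hα0.le).continuousOn
    (fun x hx => (hasDerivAt_linear_sub_rpow ?_).hasDerivWithinAt) fun x hx => ?_
  all_goals rw [interior_Ioc] at hx
  · exact hx.2
  · have := strictMonoOn_mul_rpow_sub_one (mul_pos hk hα0) hα1 (hx.1.trans hx.2) hx.2 hx.1
    simp only at this
    linarith

theorem mul_rpow_eq_of_mul_rpow_sub_one_eq {u : ℝ} (hu : 0 < u) (hα : α ≠ 0)
    (hcrit : k * α * u ^ (α - 1) = 1 / D) : k * u ^ α = u / (α * D) :=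
  calc k * u ^ α = k * α * u ^ (α - 1) * u / α := by
        rw [Real.rpow_sub_one hu.ne']; field_simp
    _ = u / (α * D) := by rw [hcrit]; field_simp

end LinearSubRpow

section AuxF

variable {b σ E₀ C m x : ℝ}

def auxCoeff (d : ℕ) (b σ C m : ℝ) : ℝ :=
  ((σ + 2) / (4 * (d : ℝ) * σ + 8 * b - 16)) ^ ((4 : ℝ) / ((d : ℝ) * σ + 2 * b)) /
    (C ^ ((4 : ℝ) / ((d : ℝ) * σ + 2 * b)) *
      m ^ ((4 - 2 * b - ((d : ℝ) - 2) * σ) / ((d : ℝ) * σ + 2 * b)))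

theorem auxF_eq (hB : 0 ≤ (σ + 2) / (4 * (d : ℝ) * σ + 8 * b - 16)) (hx : x ≤ 16 * E₀) :
    auxF d b σ E₀ C m x =
      -x / (2 * (d : ℝ) * σ + 4 * b - 8) +
          (2 * (d : ℝ) * σ + 4 * b) * E₀ / ((d : ℝ) * σ + 2 * b - 4) -
        auxCoeff d b σ C m * (16 * E₀ - x) ^ ((4 : ℝ) / ((d : ℝ) * σ + 2 * b)) := by
  rw [auxF, auxCoeff, mul_div_right_comm (σ + 2), Real.mul_rpow hB (sub_nonneg.2 hx)]
  ring

theorem critEq_iff (hs : (d : ℝ) * σ + 2 * b ≠ 0) :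
    critEq d b σ E₀ C m x ↔
      auxCoeff d b σ C m * ((4 : ℝ) / ((d : ℝ) * σ + 2 * b)) *
          (16 * E₀ - x) ^ ((4 : ℝ) / ((d : ℝ) * σ + 2 * b) - 1) =
        1 / (2 * (d : ℝ) * σ + 4 * b - 8) := by
  have hexp : (4 - (d : ℝ) * σ - 2 * b) / ((d : ℝ) * σ + 2 * b) =
      (4 : ℝ) / ((d : ℝ) * σ + 2 * b) - 1 := by
    field_simp
    ring
  rw [critEq, auxCoeff, hexp, eq_comm]
  ring_nf

end AuxF

theorem stmt18_general (d : ℕ) (hd : 3 ≤ d) (b σ : ℝ)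
    (hb2 : b < 2)
    (hσ1 : (4 - 2 * b) / (d : ℝ) < σ)
    (E₀ m C : ℝ) (hm : 0 < m) (hC : 0 < C) :
    ∃ x₀ : ℝ, x₀ < 16 * E₀ ∧ critEq d b σ E₀ C m x₀ ∧
      (∀ y : ℝ, y < 16 * E₀ → critEq d b σ E₀ C m y → y = x₀) ∧
      StrictAntiOn (auxF d b σ E₀ C m) (Set.Iio x₀) ∧
      StrictMonoOn (auxF d b σ E₀ C m) (Set.Ioc x₀ (16 * E₀)) ∧
      auxF d b σ E₀ C m x₀ = x₀ / 8 := by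
  have hd0 : (0 : ℝ) < d := by positivity
  have hs : 4 < (d : ℝ) * σ + 2 * b := by
    have := (div_lt_iff₀ hd0).1 hσ1
    linarith
  have hσ : 0 < σ := (div_pos (by linarith) hd0).trans hσ1
  have hα0 : (0 : ℝ) < 4 / ((d : ℝ) * σ + 2 * b) := by positivity
  have hα1 : (4 : ℝ) / ((d : ℝ) * σ + 2 * b) < 1 := (div_lt_one (by linarith)).2 hs
  have hk : 0 < auxCoeff d b σ C m := by
    have : 0 < (σ + 2) / (4 * (d : ℝ) * σ + 8 * b - 16) := div_pos (by linarith) (by linarith)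
    unfold auxCoeff
    positivity
  have hf : EqOn (auxF d b σ E₀ C m) _ (Iic (16 * E₀)) := fun x hx =>
    auxF_eq (div_nonneg (by linarith) (by linarith)) hx
  obtain ⟨x₀, ⟨hx₀, hcrit⟩, huniq⟩ := existsUnique_mul_rpow_sub_one_eq (L := 16 * E₀)
    (mul_pos hk hα0) hα1 (one_div_pos.2 (by linarith : (0 : ℝ) < 2 * d * σ + 4 * b - 8))
  have hs0 : (d : ℝ) * σ + 2 * b ≠ 0 := by positivity
  refine ⟨x₀, hx₀, (critEq_iff hs0).2 hcrit,
    fun y hy hcrit' => huniq y ⟨hy, (critEq_iff hs0).1 hcrit'⟩,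
    (strictAntiOn_Iio_linear_sub_rpow hα0 hα1 hk hx₀ hcrit).congr
      (hf.symm.mono (Iio_subset_Iic_self.trans (Iic_subset_Iic.2 hx₀.le))),
    (strictMonoOn_Ioc_linear_sub_rpow hα0 hα1 hk hcrit).congr (hf.symm.mono Ioc_subset_Iic_self),
    ?_⟩
  have hs4 : (d : ℝ) * σ + 2 * b - 4 ≠ 0 := by linarith
  have hD : 2 * (d : ℝ) * σ + 4 * b - 8 ≠ 0 := by linarith
  rw [hf hx₀.le, mul_rpow_eq_of_mul_rpow_sub_one_eq (sub_pos.2 hx₀) hα0.ne' hcrit]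
  field_simp
  ring

/-- The auxiliary function `f` has a unique critical point `x₀ < 16E₀`,
characterized by `critEq`; `f` is strictly decreasing on `(-∞, x₀)`, strictly increasing on
`(x₀, 16E₀]`, and `f(x₀) = x₀/8`. -/
theorem stmt18 (d : ℕ) (hd : 3 ≤ d) (b σ : ℝ)
    (hb : 0 < b) (hb2 : b < 2)
    (hσ1 : (4 - 2 * b) / (d : ℝ) < σ) (hσ2 : σ < (4 - 2 * b) / ((d : ℝ) - 2))
    (E₀ m C : ℝ) (hm : 0 < m) (hC : 0 < C) :
    ∃ x₀ : ℝ, x₀ < 16 * E₀ ∧ critEq d b σ E₀ C m x₀ ∧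
      (∀ y : ℝ, y < 16 * E₀ → critEq d b σ E₀ C m y → y = x₀) ∧
      StrictAntiOn (auxF d b σ E₀ C m) (Set.Iio x₀) ∧
      StrictMonoOn (auxF d b σ E₀ C m) (Set.Ioc x₀ (16 * E₀)) ∧
      auxF d b σ E₀ C m x₀ = x₀ / 8 :=
  stmt18_general d hd b σ hb2 hσ1 E₀ m C hm hC
end
end
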